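/- arXiv:1202.0657 — 3 statements merged into one kernel-verified Lean document; each statement's English description precedes it below -/
import Mathlib

section
/- Let f : ℝ → ℝ be continuously differentiable with compact support and f(0) = 0. Then ∫_{-∞}^{0} f(z)² / (z²(1-z)²) dz ≤ 4 ∫_{-∞}^{0} f′(z)² dz. -/
open MeasureTheory Set Filter Topology

/-! Write `g = dslope f 0`, which is `f z / z` for `z ≠ 0` and continuous since `f` is
differentiable. For `z < 0` the weight satisfies `1 / (z² (1 - z)²) ≤ 1 / z²`, so it suffices to
prove Hardy's inequality `∫ g² ≤ 4 ∫ f'²` on `(-∞, 0)`. There `(f² / z)' = 2 f' g - g²` integrates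
to `0`, and `0 ≤ (2 f' - g)²` reads `g² ≤ 4 f'² - 2 (2 f' g - g²)`. -/

section DSlope

variable {𝕜 E : Type*} [NontriviallyNormedField 𝕜] [NormedAddCommGroup E] [NormedSpace 𝕜 E]
  {f : 𝕜 → E}

theorem Differentiable.continuous_dslope (hf : Differentiable 𝕜 f) (a : 𝕜) :
    Continuous (dslope f a) := by
  refine continuous_iff_continuousAt.2 fun b => ?_
  rcases eq_or_ne b a with rfl | hb
  · exact continuousAt_dslope_same.2 (hf b)
  · exact (continuousAt_dslope_of_ne hb).2 (hf b).continuousAt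

theorem HasCompactSupport.dslope (hf : HasCompactSupport f) {a : 𝕜} (ha : f a = 0) :
    HasCompactSupport (dslope f a) := by
  refine .intro (hf.isCompact.insert a) fun b hb => ?_
  rw [mem_insert_iff, not_or] at hb
  rw [dslope_of_ne _ hb.1, slope, ha, image_eq_zero_of_notMem_tsupport hb.2, vsub_eq_sub,
    sub_zero, smul_zero]

end DSlope

section Hardy

variable {f : ℝ → ℝ}

theorem dslope_zero_eq_div (h0 : f 0 = 0) {z : ℝ} (hz : z ≠ 0) : dslope f 0 z = f z / z := by
  rw [dslope_of_ne _ hz, slope_def_field, h0, sub_zero, sub_zero]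

theorem sq_div_eq_mul_dslope (h0 : f 0 = 0) : (fun z => f z ^ 2 / z) = f * dslope f 0 := by
  ext z
  rcases eq_or_ne z 0 with rfl | hz
  · simp [h0]
  · rw [Pi.mul_apply, dslope_zero_eq_div h0 hz, sq, mul_div_assoc]

theorem hasDerivAt_sq_div (h0 : f 0 = 0) {z : ℝ} (hf : DifferentiableAt ℝ f z) (hz : z ≠ 0) :
    HasDerivAt (fun z => f z ^ 2 / z) (2 * deriv f z * dslope f 0 z - dslope f 0 z ^ 2) z := by
  refine ((hf.hasDerivAt.pow 2).div (hasDerivAt_id' z) hz).congr_deriv ?_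
  rw [dslope_zero_eq_div h0 hz, Pi.pow_apply]
  field_simp
  ring

theorem integrable_deriv_sq (hf : ContDiff ℝ 1 f) (hsupp : HasCompactSupport f) :
    Integrable fun z => deriv f z ^ 2 := by
  have hf' := hf.continuous_deriv le_rfl
  have : Integrable fun z => deriv f z * deriv f z :=
    (hf'.mul hf').integrable_of_hasCompactSupport hsupp.deriv.mul_right
  simpa only [sq] using this

theorem integrable_dslope_sq (hf : ContDiff ℝ 1 f) (hsupp : HasCompactSupport f) (h0 : f 0 = 0) :
    Integrable fun z => dslope f 0 z ^ 2 := by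
  have hg := (hf.differentiable one_ne_zero).continuous_dslope 0
  have : Integrable fun z => dslope f 0 z * dslope f 0 z :=
    (hg.mul hg).integrable_of_hasCompactSupport (hsupp.dslope h0).mul_right
  simpa only [sq] using this

theorem integrable_two_mul_deriv_mul_dslope_sub_sq (hf : ContDiff ℝ 1 f)
    (hsupp : HasCompactSupport f) (h0 : f 0 = 0) :
    Integrable fun z => 2 * deriv f z * dslope f 0 z - dslope f 0 z ^ 2 := by
  have hmul : Integrable fun z => deriv f z * dslope f 0 z :=
    ((hf.continuous_deriv le_rfl).mul ((hf.differentiable one_ne_zero).continuous_dslope 0)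
      ).integrable_of_hasCompactSupport hsupp.deriv.mul_right
  simpa only [mul_assoc] using (hmul.const_mul 2).sub' (integrable_dslope_sq hf hsupp h0)

/-- The integrand is `(f² / z)'`, and `f² / z = f · dslope f 0` is continuous and vanishes at `0`
and near `-∞`. -/
theorem integral_Iio_two_mul_deriv_mul_dslope_sub_sq (hf : ContDiff ℝ 1 f)
    (hsupp : HasCompactSupport f) (h0 : f 0 = 0) :
    ∫ z in Iio 0, (2 * deriv f z * dslope f 0 z - dslope f 0 z ^ 2) = 0 := by
  have hfd : Differentiable ℝ f := hf.differentiable one_ne_zero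
  have hcont : Continuous fun z => f z ^ 2 / z := by
    rw [sq_div_eq_mul_dslope h0]
    exact hfd.continuous.mul (hfd.continuous_dslope 0)
  have hbot : Tendsto (fun z => f z ^ 2 / z) atBot (𝓝 0) := by
    rw [sq_div_eq_mul_dslope h0]
    exact hsupp.mul_right.is_zero_at_infty.mono_left atBot_le_cocompact
  rw [← integral_Iic_eq_integral_Iio, integral_Iic_of_hasDerivAt_of_tendsto
    hcont.continuousWithinAt (fun z hz => hasDerivAt_sq_div h0 (hfd z) hz.ne)
    (integrable_two_mul_deriv_mul_dslope_sub_sq hf hsupp h0).integrableOn hbot]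
  simp [h0]

theorem integral_Iio_dslope_sq_le (hf : ContDiff ℝ 1 f) (hsupp : HasCompactSupport f)
    (h0 : f 0 = 0) :
    ∫ z in Iio 0, dslope f 0 z ^ 2 ≤ 4 * ∫ z in Iio 0, deriv f z ^ 2 := by
  have hderiv := (integrable_deriv_sq hf hsupp).integrableOn (s := Iio 0)
  have hrem := (integrable_two_mul_deriv_mul_dslope_sub_sq hf hsupp h0).integrableOn (s := Iio 0)
  calc ∫ z in Iio 0, dslope f 0 z ^ 2
      ≤ ∫ z in Iio 0, (4 * deriv f z ^ 2
          - 2 * (2 * deriv f z * dslope f 0 z - dslope f 0 z ^ 2)) := by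
        refine integral_mono (integrable_dslope_sq hf hsupp h0).integrableOn
          ((hderiv.const_mul 4).sub' (hrem.const_mul 2)) fun z => ?_
        nlinarith [sq_nonneg (2 * deriv f z - dslope f 0 z)]
    _ = 4 * ∫ z in Iio 0, deriv f z ^ 2 := by
        rw [integral_sub (hderiv.const_mul 4) (hrem.const_mul 2), integral_const_mul,
          integral_const_mul, integral_Iio_two_mul_deriv_mul_dslope_sub_sq hf hsupp h0, mul_zero,
          sub_zero]

end Hardy

/-- First Hardy-type inequality of Lemma 12.3: for `f : ℝ → ℝ` continuously differentiable
with compact support and `f 0 = 0`,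
`∫_{-∞}^{0} f(z)² / (z²(1-z)²) dz ≤ 4 ∫_{-∞}^{0} f′(z)² dz`. -/
theorem hardy_inequality_one (f : ℝ → ℝ) (hf : ContDiff ℝ 1 f)
    (hsupp : HasCompactSupport f) (h0 : f 0 = 0) :
    ∫⁻ z in Set.Iio (0 : ℝ), ENNReal.ofReal (f z ^ 2 / (z ^ 2 * (1 - z) ^ 2))
      ≤ 4 * ∫⁻ z in Set.Iio (0 : ℝ), ENNReal.ofReal (deriv f z ^ 2) := by
  have hweight : ∀ z ∈ Iio (0 : ℝ), f z ^ 2 / (z ^ 2 * (1 - z) ^ 2) ≤ dslope f 0 z ^ 2 := by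
    intro z hz
    rw [dslope_zero_eq_div h0 hz.ne, div_pow]
    exact div_le_div_of_nonneg_left (sq_nonneg _) (sq_pos_of_neg hz)
      (le_mul_of_one_le_right (sq_nonneg z) (one_le_pow₀ (by linarith [hz.out])))
  calc ∫⁻ z in Iio 0, ENNReal.ofReal (f z ^ 2 / (z ^ 2 * (1 - z) ^ 2))
      ≤ ∫⁻ z in Iio 0, ENNReal.ofReal (dslope f 0 z ^ 2) :=
        setLIntegral_mono' measurableSet_Iio fun z hz => ENNReal.ofReal_le_ofReal (hweight z hz)
    _ = ENNReal.ofReal (∫ z in Iio 0, dslope f 0 z ^ 2) :=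
        (ofReal_integral_eq_lintegral_ofReal (integrable_dslope_sq hf hsupp h0).integrableOn
          (ae_of_all _ fun _ => sq_nonneg _)).symm
    _ ≤ ENNReal.ofReal (4 * ∫ z in Iio 0, deriv f z ^ 2) :=
        ENNReal.ofReal_le_ofReal (integral_Iio_dslope_sq_le hf hsupp h0)
    _ = 4 * ∫⁻ z in Iio 0, ENNReal.ofReal (deriv f z ^ 2) := by
        rw [ENNReal.ofReal_mul zero_le_four, ofReal_integral_eq_lintegral_ofReal
          (integrable_deriv_sq hf hsupp).integrableOn (ae_of_all _ fun _ => sq_nonneg _),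
          ENNReal.ofReal_ofNat]
end

section
/- Let Ω ⊆ ℝ³ be open and φ, v : Ω → ℝ twice continuously differentiable with ∂_zφ(x) ≠ 0 for every x ∈ Ω, and let v̇, φ̇ : Ω → ℝ be continuously differentiable. Then for every i ∈ {1,2,3} the pointwise identity holds on Ω: ∂_i^φ v̇ − (∂_z^φ v)·(∂_i^φ φ̇) = ∂_i^φ( v̇ − (∂_z^φ v)·φ̇ ) + φ̇ · ∂_z^φ(∂_i^φ v). -/
/-- The `i`-th partial derivative of a function on `ℝ³` (coordinates `x = (y₁, y₂, z)`,
with `z` the coordinate of index `2`). -/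
noncomputable def pd (i : Fin 3) (f : (Fin 3 → ℝ) → ℝ) (x : Fin 3 → ℝ) : ℝ :=
  fderiv ℝ f x (Pi.single i 1)

/-- The operators `∂ᵢ^φ` associated to `φ`:
`∂₁^φ f = ∂₁f − (∂₁φ/∂_zφ)∂_zf`, `∂₂^φ f = ∂₂f − (∂₂φ/∂_zφ)∂_zf`,
`∂₃^φ f = ∂_z^φ f = (1/∂_zφ)∂_zf`. -/
noncomputable def pdphi (φ : (Fin 3 → ℝ) → ℝ) (i : Fin 3) (f : (Fin 3 → ℝ) → ℝ)
    (x : Fin 3 → ℝ) : ℝ :=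
  if i = 2 then pd 2 f x / pd 2 φ x
  else pd i f x - pd i φ x / pd 2 φ x * pd 2 f x

/-!
Both `∂ᵢ^φ` and `∂_z^φ` are derivations, so by the Leibniz rule the two sides differ by
`φ̇ · (∂_z^φ ∂ᵢ^φ v − ∂ᵢ^φ ∂_z^φ v)`. This vanishes because the operators `∂ᵢ^φ` commute, being
the coordinate derivatives transported by the change of variables `(y, z) ↦ (y, φ(y, z))`;
concretely, the commutator expands into second partials of `v` and `φ` that cancel by the
symmetry of second derivatives.
-/

theorem ContDiffAt.fderiv_fderiv_apply_comm {E F : Type*} [NormedAddCommGroup E] [NormedSpace ℝ E]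
    [NormedAddCommGroup F] [NormedSpace ℝ F] {f : E → F} {x : E} (hf : ContDiffAt ℝ 2 f x)
    (v w : E) :
    fderiv ℝ (fun y => fderiv ℝ f y v) x w = fderiv ℝ (fun y => fderiv ℝ f y w) x v := by
  have hd : DifferentiableAt ℝ (fderiv ℝ f) x :=
    (hf.fderiv_right (m := 1) (by norm_num)).differentiableAt one_ne_zero
  simp only [fderiv_clm_apply hd (differentiableAt_const _), fderiv_const_apply,
    ContinuousLinearMap.comp_zero, zero_add, ContinuousLinearMap.flip_apply]
  exact hf.isSymmSndFDerivAt (by simp [minSmoothness_of_isRCLikeNormedField]) w v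

theorem DifferentiableAt.fun_div' {E : Type*} [NormedAddCommGroup E] [NormedSpace ℝ E]
    {f g : E → ℝ} {x : E} (hf : DifferentiableAt ℝ f x) (hg : DifferentiableAt ℝ g x)
    (hx : g x ≠ 0) : DifferentiableAt ℝ (fun y => f y / g y) x := by
  simpa only [div_eq_mul_inv] using hf.fun_mul (hg.fun_inv hx)

section PartialDeriv

variable {f g : (Fin 3 → ℝ) → ℝ} {x : Fin 3 → ℝ}

theorem pd_sub (i : Fin 3) (hf : DifferentiableAt ℝ f x) (hg : DifferentiableAt ℝ g x) :
    pd i (fun y => f y - g y) x = pd i f x - pd i g x := by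
  simp [pd, fderiv_fun_sub hf hg]

theorem pd_mul (i : Fin 3) (hf : DifferentiableAt ℝ f x) (hg : DifferentiableAt ℝ g x) :
    pd i (fun y => f y * g y) x = f x * pd i g x + g x * pd i f x := by
  simp [pd, fderiv_fun_mul hf hg]

theorem pd_div (i : Fin 3) (hf : DifferentiableAt ℝ f x) (hg : DifferentiableAt ℝ g x)
    (hx : g x ≠ 0) :
    pd i (fun y => f y / g y) x = (pd i f x * g x - f x * pd i g x) / g x ^ 2 := by
  have hinv : HasFDerivAt (fun y => (g y)⁻¹)
      ((ContinuousLinearMap.toSpanSingleton ℝ (-(g x ^ 2)⁻¹)).comp (fderiv ℝ g x)) x :=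
    (hasFDerivAt_inv hx).comp x hg.hasFDerivAt
  simp only [div_eq_mul_inv]
  rw [pd_mul i hf hinv.differentiableAt]
  simp only [pd, hinv.fderiv, ContinuousLinearMap.comp_apply,
    ContinuousLinearMap.toSpanSingleton_apply, smul_eq_mul, mul_neg]
  field_simp
  ring

theorem ContDiffAt.differentiableAt_pd (hf : ContDiffAt ℝ 2 f x) (j : Fin 3) :
    DifferentiableAt ℝ (pd j f) x :=
  ((hf.fderiv_right (m := 1) (by norm_num)).differentiableAt one_ne_zero).clm_apply
    (differentiableAt_const _)

theorem ContDiffAt.pd_pd_comm (hf : ContDiffAt ℝ 2 f x) (i j : Fin 3) :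
    pd i (pd j f) x = pd j (pd i f) x :=
  hf.fderiv_fderiv_apply_comm _ _

end PartialDeriv

section StraightenedDeriv

variable {φ f g : (Fin 3 → ℝ) → ℝ} {x : Fin 3 → ℝ}

theorem pdphi_sub (i : Fin 3) (hf : DifferentiableAt ℝ f x) (hg : DifferentiableAt ℝ g x) :
    pdphi φ i (fun y => f y - g y) x = pdphi φ i f x - pdphi φ i g x := by
  simp only [pdphi, pd_sub _ hf hg]
  split_ifs <;> ring

theorem pdphi_mul (i : Fin 3) (hf : DifferentiableAt ℝ f x) (hg : DifferentiableAt ℝ g x) :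
    pdphi φ i (fun y => f y * g y) x = f x * pdphi φ i g x + g x * pdphi φ i f x := by
  simp only [pdphi, pd_mul _ hf hg]
  split_ifs <;> ring

theorem differentiableAt_pdphi (hφ : ContDiffAt ℝ 2 φ x) (hf : ContDiffAt ℝ 2 f x)
    (hx : pd 2 φ x ≠ 0) (i : Fin 3) : DifferentiableAt ℝ (pdphi φ i f) x := by
  unfold pdphi
  split_ifs
  · exact (hf.differentiableAt_pd 2).fun_div' (hφ.differentiableAt_pd 2) hx
  · exact (hf.differentiableAt_pd i).sub
      (((hφ.differentiableAt_pd i).fun_div' (hφ.differentiableAt_pd 2) hx).fun_mul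
        (hf.differentiableAt_pd 2))

theorem pdphi_pdphi_two_comm (hφ : ContDiffAt ℝ 2 φ x) (hf : ContDiffAt ℝ 2 f x)
    (hx : pd 2 φ x ≠ 0) (i : Fin 3) :
    pdphi φ i (pdphi φ 2 f) x = pdphi φ 2 (pdphi φ i f) x := by
  rcases eq_or_ne i 2 with rfl | hi
  · rfl
  have dfz := hf.differentiableAt_pd 2
  have dφz := hφ.differentiableAt_pd 2
  have dφi := hφ.differentiableAt_pd i
  have hz : pdphi φ 2 f = fun y => pd 2 f y / pd 2 φ y := rfl
  have hfi : pdphi φ i f = fun y => pd i f y - pd i φ y / pd 2 φ y * pd 2 f y := by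
    funext y; simp [pdphi, hi]
  simp only [pdphi, if_neg hi, if_true, hz, hfi]
  rw [pd_div i dfz dφz hx, pd_div 2 dfz dφz hx,
    pd_sub 2 (hf.differentiableAt_pd i) ((dφi.fun_div' dφz hx).fun_mul dfz),
    pd_mul 2 (dφi.fun_div' dφz hx) dfz, pd_div 2 dφi dφz hx,
    hf.pd_pd_comm 2 i, hφ.pd_pd_comm 2 i]
  field_simp
  ring

end StraightenedDeriv

/-- Alinhac's "good unknown" cancellation, first-order identity (2.27) of Lemma 2.7:
`∂ᵢ^φ v̇ − (∂_z^φ v)(∂ᵢ^φ φ̇) = ∂ᵢ^φ(v̇ − (∂_z^φ v) φ̇) + φ̇ ∂_z^φ(∂ᵢ^φ v)`. -/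
theorem alinhac_first_order (Ω : Set (Fin 3 → ℝ)) (hΩ : IsOpen Ω)
    (φ v vdot φdot : (Fin 3 → ℝ) → ℝ)
    (hφ : ContDiffOn ℝ 2 φ Ω) (hv : ContDiffOn ℝ 2 v Ω)
    (hvdot : ContDiffOn ℝ 1 vdot Ω) (hφdot : ContDiffOn ℝ 1 φdot Ω)
    (hz : ∀ x ∈ Ω, pd 2 φ x ≠ 0) :
    ∀ i : Fin 3, ∀ x ∈ Ω,
      pdphi φ i vdot x - pdphi φ 2 v x * pdphi φ i φdot x
        = pdphi φ i (fun y => vdot y - pdphi φ 2 v y * φdot y) x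
          + φdot x * pdphi φ 2 (pdphi φ i v) x := by
  intro i x hx
  have hφx := (hφ x hx).contDiffAt (hΩ.mem_nhds hx)
  have hvx := (hv x hx).contDiffAt (hΩ.mem_nhds hx)
  have dvdot := ((hvdot x hx).contDiffAt (hΩ.mem_nhds hx)).differentiableAt one_ne_zero
  have dφdot := ((hφdot x hx).contDiffAt (hΩ.mem_nhds hx)).differentiableAt one_ne_zero
  have dvz := differentiableAt_pdphi hφx hvx (hz x hx) 2
  rw [pdphi_sub i dvdot (dvz.fun_mul dφdot), pdphi_mul i dvz dφdot,
    pdphi_pdphi_two_comm hφx hvx (hz x hx) i]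
  ring
end

section
/- Let m, c₀ > 0. Let a₀ ∈ ℝ with a₀ ≥ m, and let a = (a_{ij})_{1≤i,j≤3} be a real symmetric 3×3 matrix with a₃₃ ≥ m and ηᵀ a η ≥ c₀|η|² for all η ∈ ℝ³. Let γ̃ ≥ 0, τ̃ ∈ ℝ and ξ̃ = (ξ̃₁,ξ̃₂) ∈ ℝ² satisfy γ̃² + τ̃² + |ξ̃|⁴ = 1. Define the 2×2 complex matrix 𝒜 with rows (0, 1) and ( (a₀/a₃₃)(γ̃ + iτ̃) + Σ_{1≤i,j≤2} (a_{ij}/a₃₃) ξ̃_i ξ̃_j , −2i Σ_{k=1}^{2} (a_{k3}/a₃₃) ξ̃_k ). Then 𝒜 has no purely imaginary eigenvalue: for every λ ∈ ℝ, det(𝒜 − iλ·Id) ≠ 0. -/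
/-!
If `iλ` were an eigenvalue, then by symmetry of `a`,
`a₃₃ · det(𝒜 - iλ) = -(ηᵀ a η + a₀ (γ̃ + i τ̃))` with `η = (ξ̃₁, ξ̃₂, λ)`.
The imaginary part gives `τ̃ = 0`. In the real part `ηᵀ a η` and `a₀ γ̃` are both nonnegative,
so both vanish and ellipticity forces `η = 0`; then `γ̃ = τ̃ = 0` and `ξ̃ = 0`, contradicting
`γ̃² + τ̃² + |ξ̃|⁴ = 1`.
-/

open Finset

theorem sum_sum_mul_mul_eq_castSucc_add_last {R : Type*} [CommRing R] {n : ℕ}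
    (a : Fin (n + 1) → Fin (n + 1) → R) (hsym : ∀ i j, a i j = a j i) (η : Fin (n + 1) → R) :
    ∑ i, ∑ j, η i * a i j * η j
      = ∑ i : Fin n, ∑ j : Fin n, η i.castSucc * a i.castSucc j.castSucc * η j.castSucc
        + 2 * η (Fin.last n) * ∑ k : Fin n, a k.castSucc (Fin.last n) * η k.castSucc
        + a (Fin.last n) (Fin.last n) * η (Fin.last n) ^ 2 := by
  have hrow : ∑ k : Fin n, η (Fin.last n) * a (Fin.last n) k.castSucc * η k.castSucc
      = η (Fin.last n) * ∑ k : Fin n, a k.castSucc (Fin.last n) * η k.castSucc := by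
    rw [mul_sum]
    exact sum_congr rfl fun k _ => by rw [hsym]; ring
  have hcol : ∑ k : Fin n, η k.castSucc * a k.castSucc (Fin.last n) * η (Fin.last n)
      = η (Fin.last n) * ∑ k : Fin n, a k.castSucc (Fin.last n) * η k.castSucc := by
    rw [mul_sum]
    exact sum_congr rfl fun k _ => by ring
  simp only [Fin.sum_univ_castSucc, sum_add_distrib, hrow, hcol]
  ring

theorem sum_sum_snoc_mul_mul_snoc {K : Type*} [Field K] {n : ℕ}
    (a : Fin (n + 1) → Fin (n + 1) → K) (hsym : ∀ i j, a i j = a j i)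
    (ha : a (Fin.last n) (Fin.last n) ≠ 0) (ξ : Fin n → K) (t : K) :
    ∑ i, ∑ j, (Fin.snoc ξ t : Fin (n + 1) → K) i * a i j * (Fin.snoc ξ t : Fin (n + 1) → K) j
      = a (Fin.last n) (Fin.last n)
        * (∑ i : Fin n, ∑ j : Fin n,
              a i.castSucc j.castSucc / a (Fin.last n) (Fin.last n) * ξ i * ξ j
            + 2 * t * ∑ k : Fin n, a k.castSucc (Fin.last n) / a (Fin.last n) (Fin.last n) * ξ k
            + t ^ 2) := by
  rw [sum_sum_mul_mul_eq_castSucc_add_last a hsym]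
  simp only [Fin.snoc_castSucc, Fin.snoc_last, mul_add, mul_sum]
  field_simp
  simp only [mul_comm, mul_left_comm]

theorem det_companion_sub_smul_one {R : Type*} [CommRing R] (c d μ : R) :
    (!![0, 1; c, d] - μ • (1 : Matrix (Fin 2) (Fin 2) R)).det = μ ^ 2 - d * μ - c := by
  have hM : !![0, 1; c, d] - μ • (1 : Matrix (Fin 2) (Fin 2) R) = !![-μ, 1; c, d - μ] := by
    ext i j
    fin_cases i <;> fin_cases j <;> simp
  rw [hM, Matrix.det_fin_two_of]
  ring

open Complex in
theorem det_symbol_sub_smul_eq_zero_iff (p γ τ Q S lam : ℝ) :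
    (!![0, 1; (p : ℂ) * ((γ : ℂ) + (τ : ℂ) * I) + (Q : ℂ), (-2) * I * (S : ℂ)]
        - (I * (lam : ℂ)) • (1 : Matrix (Fin 2) (Fin 2) ℂ)).det = 0
      ↔ lam ^ 2 + 2 * S * lam + Q + p * γ = 0 ∧ p * τ = 0 := by
  have hdet : (!![0, 1; (p : ℂ) * ((γ : ℂ) + (τ : ℂ) * I) + (Q : ℂ), (-2) * I * (S : ℂ)]
        - (I * (lam : ℂ)) • (1 : Matrix (Fin 2) (Fin 2) ℂ)).det
      = -⟨lam ^ 2 + 2 * S * lam + Q + p * γ, p * τ⟩ := by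
    rw [det_companion_sub_smul_one, mk_eq_add_mul_I]
    push_cast
    linear_combination (lam ^ 2 + 2 * S * lam : ℂ) * I_sq
  rw [hdet, neg_eq_zero, Complex.ext_iff]
  rfl

/-- First step of the proof of Lemma 10.5: the symbol `𝒜(a, ζ̃)` of the parabolic
boundary-value problem has no purely imaginary eigenvalue on the parabolic unit sphere. -/
theorem symbol_no_imaginary_eigenvalue (m c₀ : ℝ) (hm : 0 < m) (hc₀ : 0 < c₀)
    (a₀ : ℝ) (a : Fin 3 → Fin 3 → ℝ)
    (ha₀ : m ≤ a₀) (hsym : ∀ i j, a i j = a j i) (h33 : m ≤ a 2 2)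
    (hell : ∀ η : Fin 3 → ℝ, c₀ * (∑ i : Fin 3, η i ^ 2)
        ≤ ∑ i : Fin 3, ∑ j : Fin 3, η i * a i j * η j)
    (γ τ : ℝ) (ξ : Fin 2 → ℝ) (hγ : 0 ≤ γ)
    (hsphere : γ ^ 2 + τ ^ 2 + (∑ i : Fin 2, ξ i ^ 2) ^ 2 = 1) :
    ∀ lam : ℝ,
      Matrix.det
        ((!![0, 1;
            ((a₀ / a 2 2 : ℝ) : ℂ) * ((γ : ℂ) + (τ : ℂ) * Complex.I)
              + ((∑ i : Fin 2, ∑ j : Fin 2,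
                    a i.castSucc j.castSucc / a 2 2 * ξ i * ξ j : ℝ) : ℂ),
            (-2) * Complex.I
              * ((∑ k : Fin 2, a k.castSucc 2 / a 2 2 * ξ k : ℝ) : ℂ)] :
              Matrix (Fin 2) (Fin 2) ℂ)
          - (Complex.I * (lam : ℂ)) • (1 : Matrix (Fin 2) (Fin 2) ℂ)) ≠ 0 := by
  intro lam hdet
  set Q := ∑ i : Fin 2, ∑ j : Fin 2, a i.castSucc j.castSucc / a 2 2 * ξ i * ξ j
  set S := ∑ k : Fin 2, a k.castSucc 2 / a 2 2 * ξ k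
  have ha_pos : 0 < a 2 2 := hm.trans_le h33
  have ha₀_pos : 0 < a₀ := hm.trans_le ha₀
  obtain ⟨hre, him⟩ := (det_symbol_sub_smul_eq_zero_iff _ _ _ _ _ _).mp hdet
  have hτ : τ = 0 := by simpa [ha_pos.ne', ha₀_pos.ne'] using him
  set η : Fin 3 → ℝ := Fin.snoc ξ lam
  have hquad : ∑ i, ∑ j, η i * a i j * η j = -(a₀ * γ) := by
    have hform : ∑ i, ∑ j, η i * a i j * η j = a 2 2 * (Q + 2 * lam * S + lam ^ 2) :=
      sum_sum_snoc_mul_mul_snoc a hsym ha_pos.ne' ξ lam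
    have hcancel : a 2 2 * (a₀ / a 2 2 * γ) = a₀ * γ := by field_simp
    linear_combination hform + a 2 2 * hre - hcancel
  have hbound : c₀ * ∑ i, η i ^ 2 ≤ -(a₀ * γ) := hquad ▸ hell η
  have hη_nonneg : 0 ≤ ∑ i, η i ^ 2 := by positivity
  have hγ0 : γ = 0 := by nlinarith
  have hη0 : ∑ i, η i ^ 2 = 0 :=
    le_antisymm (nonpos_of_mul_nonpos_right (by simpa [hγ0] using hbound) hc₀) hη_nonneg
  have hξ0 : ∑ i, ξ i ^ 2 = 0 := by
    rw [Fin.sum_univ_castSucc] at hη0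
    simp only [η, Fin.snoc_castSucc, Fin.snoc_last] at hη0
    linarith [sq_nonneg lam, sum_nonneg fun i (_ : i ∈ univ) => sq_nonneg (ξ i)]
  simp [hγ0, hτ, hξ0] at hsphere
end
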